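/- Let (X1, X2) be a random vector on ℝ² whose law has density f with respect to Lebesgue measure, where f is the bivariate normal density with means μ1, μ2 ∈ ℝ, standard deviations σ1, σ2 > 0 and correlation ρ ∈ (−1,1). Then for every x ∈ ℝ: P{X2 > 0 and X1 ≤ x·X2} + P{X2 < 0 and X1 ≥ x·X2} = ∫_{−∞}^x ( g(t) + g̃(t) ) dt, where g(t) := ∫₀^∞ s·f(t·s, s) ds and g̃(t) := −∫_{−∞}^0 s·f(t·s, s) ds. In other words, the (unconditioned) quotient X1/X2 has density g + g̃. -/

import Mathlib

/-!
For any joint density `f` of `(X1, X2)`, Fubini and the substitution `s1 = t * s` on each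
horizontal line `s ≠ 0` show that `X1 / X2` has density `t ↦ ∫ |s| f(t s, s) ds`; the line
`s = 0` is Lebesgue-null. Since this density has total mass one, it is finite for almost every
`t`, and for such `t` the integral splits over `s > 0` and `s < 0` into `g(t) + g̃(t)`. The event
of the first claim differs from `{X1 / X2 ≤ x}` only on the null event `{X2 = 0}`.
-/

open Real MeasureTheory ProbabilityTheory Set Filter

/-- The bivariate normal density with means `μ1, μ2`, standard deviations `σ1, σ2`
and correlation `ρ`. -/
noncomputable def bvnDensity (μ1 μ2 σ1 σ2 ρ : ℝ) (s1 s2 : ℝ) : ℝ :=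
  (2 * π * σ1 * σ2 * Real.sqrt (1 - ρ ^ 2))⁻¹ *
    Real.exp (-(1 / 2) * (((s2 - μ2) / σ2) ^ 2 +
      (s1 - μ1 - ρ * (σ1 / σ2) * (s2 - μ2)) ^ 2 / (σ1 ^ 2 * (1 - ρ ^ 2))))

open scoped ENNReal

lemma lintegral_ofReal_abs_mul_comp_mul_right (g : ℝ → ℝ≥0∞) {a : ℝ} (ha : a ≠ 0) :
    ∫⁻ t, ENNReal.ofReal |a| * g (t * a) = ∫⁻ y, g y := by
  conv_rhs => rw [← Real.smul_map_volume_mul_right ha]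
  have he : MeasurableEmbedding (· * a) := (Homeomorph.mulRight₀ a ha).measurableEmbedding
  rw [lintegral_smul_measure, he.lintegral_map, lintegral_const_mul' _ _ ENNReal.ofReal_ne_top,
    smul_eq_mul]

noncomputable def divDensity (f : ℝ × ℝ → ℝ≥0∞) (t : ℝ) : ℝ≥0∞ :=
  ∫⁻ s, ENNReal.ofReal |s| * f (t * s, s)

lemma measurable_divDensity {f : ℝ × ℝ → ℝ≥0∞} (hf : Measurable f) :
    Measurable (divDensity f) :=
  Measurable.lintegral_prod_right' (f := fun q => ENNReal.ofReal |q.2| * f (q.1 * q.2, q.2))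
    (by fun_prop)

theorem map_div_withDensity {f : ℝ × ℝ → ℝ≥0∞} (hf : Measurable f) :
    (volume.withDensity f).map (fun p => p.1 / p.2) = volume.withDensity (divDensity f) := by
  ext A hA
  have hS : MeasurableSet ((fun p : ℝ × ℝ => p.1 / p.2) ⁻¹' A) := by measurability
  have slice : ∀ s ≠ 0, ∫⁻ y, ((fun p : ℝ × ℝ => p.1 / p.2) ⁻¹' A).indicator f (y, s) =
      ∫⁻ t in A, ENNReal.ofReal |s| * f (t * s, s) := by
    intro s hs
    rw [← lintegral_ofReal_abs_mul_comp_mul_right _ hs, ← lintegral_indicator hA]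
    congr 1 with t
    by_cases ht : t ∈ A <;> simp [ht, mul_div_cancel_right₀ _ hs]
  rw [Measure.map_apply (by fun_prop) hA, withDensity_apply _ hS, withDensity_apply _ hA,
    ← lintegral_indicator hS, Measure.volume_eq_prod, lintegral_prod_symm' _ (hf.indicator hS),
    lintegral_congr_ae ((Measure.ae_ne volume 0).mono slice)]
  exact lintegral_lintegral_swap (by fun_prop)

lemma withDensity_setOf_snd_eq_zero (f : ℝ × ℝ → ℝ≥0∞) :
    volume.withDensity f {p : ℝ × ℝ | p.2 = 0} = 0 := by
  apply withDensity_absolutelyContinuous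
  have : {p : ℝ × ℝ | p.2 = 0} = univ ×ˢ {0} := by ext; simp
  rw [this, Measure.volume_eq_prod, Measure.prod_prod, measure_singleton, mul_zero]

lemma measure_add_measure_eq_measure_div_le {Ω : Type*} [MeasurableSpace Ω] {P : Measure Ω}
    {X1 X2 : Ω → ℝ} (hX1 : Measurable X1) (hX2 : Measurable X2) (h0 : P {ω | X2 ω = 0} = 0)
    (x : ℝ) :
    P {ω | 0 < X2 ω ∧ X1 ω ≤ x * X2 ω} + P {ω | X2 ω < 0 ∧ x * X2 ω ≤ X1 ω} =
      P ((fun ω => X1 ω / X2 ω) ⁻¹' Iic x) := by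
  have hdisj : Disjoint {ω | 0 < X2 ω ∧ X1 ω ≤ x * X2 ω} {ω | X2 ω < 0 ∧ x * X2 ω ≤ X1 ω} :=
    disjoint_left.2 fun ω h h' => lt_asymm h.1 h'.1
  rw [← measure_union hdisj (by measurability)]
  refine measure_congr (eventuallyEq_set.2 ?_)
  filter_upwards [measure_eq_zero_iff_ae_notMem.1 h0] with ω hω
  rcases lt_or_gt_of_ne hω with hneg | hpos
  · simp [hneg, hneg.not_gt, div_le_iff_of_neg hneg]
  · simp [hpos, hpos.not_gt, div_le_iff₀ hpos]

lemma withDensity_ofReal_apply_eq_ofReal_setIntegral {α : Type*} [MeasurableSpace α]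
    {μ : Measure α} {h : α → ℝ} (hm : Measurable h) (h0 : ∀ x, 0 ≤ h x)
    [IsFiniteMeasure (μ.withDensity fun x => ENNReal.ofReal (h x))] {s : Set α}
    (hs : MeasurableSet s) :
    μ.withDensity (fun x => ENNReal.ofReal (h x)) s = ENNReal.ofReal (∫ x in s, h x ∂μ) := by
  have hint : IntegrableOn h s μ := by
    refine ⟨hm.aestronglyMeasurable, (hasFiniteIntegral_iff_ofReal (ae_of_all _ h0)).2 ?_⟩
    rw [← withDensity_apply _ hs]
    exact measure_lt_top _ _
  rw [withDensity_apply _ hs, ofReal_integral_eq_lintegral_ofReal hint (ae_of_all _ h0)]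

/-- The paper's `g + g̃`, for a density `f` in curried form. -/
noncomputable def divDensityReal (f : ℝ → ℝ → ℝ) (t : ℝ) : ℝ :=
  (∫ s in Ioi 0, s * f (t * s) s) + -∫ s in Iio 0, s * f (t * s) s

lemma divDensityReal_nonneg {f : ℝ → ℝ → ℝ} (hf0 : ∀ x y, 0 ≤ f x y) (t : ℝ) :
    0 ≤ divDensityReal f t := by
  have hpos : 0 ≤ ∫ s in Ioi 0, s * f (t * s) s :=
    setIntegral_nonneg measurableSet_Ioi fun s hs => mul_nonneg (le_of_lt hs) (hf0 _ _)
  have hneg : ∫ s in Iio 0, s * f (t * s) s ≤ 0 :=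
    setIntegral_nonpos measurableSet_Iio fun s hs =>
      mul_nonpos_of_nonpos_of_nonneg (le_of_lt hs) (hf0 _ _)
  unfold divDensityReal
  linarith

lemma measurable_divDensityReal {f : ℝ → ℝ → ℝ} (hf : Measurable (Function.uncurry f)) :
    Measurable (divDensityReal f) := by
  have hF : Measurable fun q : ℝ × ℝ => q.2 * f (q.1 * q.2) q.2 :=
    measurable_snd.mul (hf.comp ((measurable_fst.mul measurable_snd).prodMk measurable_snd))
  exact (hF.stronglyMeasurable.integral_prod_right' (ν := volume.restrict (Ioi 0))).measurable.add
    (hF.stronglyMeasurable.integral_prod_right' (ν := volume.restrict (Iio 0))).measurable.neg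

lemma lintegral_ofReal_abs_mul_eq {g : ℝ → ℝ} (hg : Measurable g) (hg0 : ∀ s, 0 ≤ g s)
    (hfin : ∫⁻ s, ENNReal.ofReal |s| * ENNReal.ofReal (g s) ≠ ∞) :
    ∫⁻ s, ENNReal.ofReal |s| * ENNReal.ofReal (g s) =
      ENNReal.ofReal ((∫ s in Ioi 0, s * g s) + -∫ s in Iio 0, s * g s) := by
  have hprod : ∀ s, ENNReal.ofReal |s| * ENNReal.ofReal (g s) = ENNReal.ofReal (|s| * g s) :=
    fun s => (ENNReal.ofReal_mul (abs_nonneg s)).symm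
  have hint : Integrable fun s => |s| * g s := by
    refine ⟨by fun_prop, (hasFiniteIntegral_iff_ofReal (ae_of_all _ fun s => ?_)).2 ?_⟩
    · exact mul_nonneg (abs_nonneg s) (hg0 s)
    · simpa only [← hprod] using hfin.lt_top
  have hsplit : ∫ s, |s| * g s = (∫ s in Ioi 0, s * g s) + -∫ s in Iio 0, s * g s := by
    rw [← intervalIntegral.integral_Iio_add_Ici hint.integrableOn hint.integrableOn,
      integral_Ici_eq_integral_Ioi, add_comm, ← integral_neg]
    congr 1
    · exact setIntegral_congr_fun measurableSet_Ioi fun s (hs : 0 < s) => by rw [abs_of_pos hs]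
    · exact setIntegral_congr_fun measurableSet_Iio fun s (hs : s < 0) => by
        rw [abs_of_neg hs, neg_mul]
  simp_rw [hprod]
  rw [← hsplit, ofReal_integral_eq_lintegral_ofReal hint
    (ae_of_all _ fun s => mul_nonneg (abs_nonneg s) (hg0 s))]

lemma divDensity_ofReal_ae_eq {f : ℝ → ℝ → ℝ} (hf : Measurable (Function.uncurry f))
    (hf0 : ∀ x y, 0 ≤ f x y)
    [IsFiniteMeasure (volume.withDensity fun p : ℝ × ℝ => ENNReal.ofReal (f p.1 p.2))] :
    divDensity (fun p => ENNReal.ofReal (f p.1 p.2)) =ᵐ[volume]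
      fun t => ENNReal.ofReal (divDensityReal f t) := by
  have hF : Measurable fun p : ℝ × ℝ => ENNReal.ofReal (f p.1 p.2) := hf.ennreal_ofReal
  -- `divDensity` has the total mass of the joint law
  have hmass : ∫⁻ t, divDensity (fun p => ENNReal.ofReal (f p.1 p.2)) t ≠ ∞ := by
    rw [← setLIntegral_univ, ← withDensity_apply _ MeasurableSet.univ, ← map_div_withDensity hF]
    exact measure_ne_top _ _
  filter_upwards [ae_lt_top (measurable_divDensity hF) hmass] with t ht
  exact lintegral_ofReal_abs_mul_eq (hf.comp (by fun_prop)) (fun s => hf0 _ _) ht.ne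

theorem map_div_eq_withDensity_divDensityReal {Ω : Type*} [MeasurableSpace Ω] {P : Measure Ω}
    [IsFiniteMeasure P] {X1 X2 : Ω → ℝ} (hX : Measurable fun ω => (X1 ω, X2 ω))
    {f : ℝ → ℝ → ℝ} (hf : Measurable (Function.uncurry f)) (hf0 : ∀ x y, 0 ≤ f x y)
    (hlaw : P.map (fun ω => (X1 ω, X2 ω)) =
      volume.withDensity fun p => ENNReal.ofReal (f p.1 p.2)) :
    P.map (fun ω => X1 ω / X2 ω) =
      volume.withDensity fun t => ENNReal.ofReal (divDensityReal f t) := by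
  have : IsFiniteMeasure (volume.withDensity fun p : ℝ × ℝ => ENNReal.ofReal (f p.1 p.2)) :=
    hlaw ▸ inferInstance
  rw [← withDensity_congr_ae (divDensity_ofReal_ae_eq hf hf0),
    ← map_div_withDensity (f := fun p => ENNReal.ofReal (f p.1 p.2)) hf.ennreal_ofReal, ← hlaw,
    Measure.map_map (by fun_prop) hX]
  rfl

lemma bvnDensity_nonneg (μ1 μ2 ρ : ℝ) {σ1 σ2 : ℝ} (hσ1 : 0 ≤ σ1) (hσ2 : 0 ≤ σ2) (s1 s2 : ℝ) :
    0 ≤ bvnDensity μ1 μ2 σ1 σ2 ρ s1 s2 := by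
  unfold bvnDensity; positivity

lemma measurable_bvnDensity (μ1 μ2 σ1 σ2 ρ : ℝ) :
    Measurable (Function.uncurry (bvnDensity μ1 μ2 σ1 σ2 ρ)) := by
  unfold bvnDensity Function.uncurry; fun_prop

theorem quotient_unconditioned_density
    {Ω : Type*} [MeasurableSpace Ω] (P : Measure Ω) [IsProbabilityMeasure P]
    (X1 X2 : Ω → ℝ) (hX : Measurable fun ω => (X1 ω, X2 ω))
    (μ1 μ2 σ1 σ2 ρ : ℝ) (hσ1 : 0 < σ1) (hσ2 : 0 < σ2)
    (hlaw : Measure.map (fun ω => (X1 ω, X2 ω)) P =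
      volume.withDensity fun p => ENNReal.ofReal (bvnDensity μ1 μ2 σ1 σ2 ρ p.1 p.2)) :
    (∀ x : ℝ,
      P {ω | 0 < X2 ω ∧ X1 ω ≤ x * X2 ω} + P {ω | X2 ω < 0 ∧ x * X2 ω ≤ X1 ω} =
        ENNReal.ofReal (∫ t in Set.Iic x,
          ((∫ s in Set.Ioi (0 : ℝ), s * bvnDensity μ1 μ2 σ1 σ2 ρ (t * s) s) +
            -∫ s in Set.Iio (0 : ℝ), s * bvnDensity μ1 μ2 σ1 σ2 ρ (t * s) s))) ∧
    Measure.map (fun ω => X1 ω / X2 ω) P =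
      volume.withDensity fun t => ENNReal.ofReal
        ((∫ s in Set.Ioi (0 : ℝ), s * bvnDensity μ1 μ2 σ1 σ2 ρ (t * s) s) +
          -∫ s in Set.Iio (0 : ℝ), s * bvnDensity μ1 μ2 σ1 σ2 ρ (t * s) s) := by
  set f := bvnDensity μ1 μ2 σ1 σ2 ρ
  have hf0 : ∀ x y, 0 ≤ f x y := bvnDensity_nonneg μ1 μ2 ρ hσ1.le hσ2.le
  have hmap : P.map (fun ω => X1 ω / X2 ω) =
      volume.withDensity fun t => ENNReal.ofReal (divDensityReal f t) :=
    map_div_eq_withDensity_divDensityReal hX (measurable_bvnDensity μ1 μ2 σ1 σ2 ρ) hf0 hlaw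
  have hX2_zero : P {ω | X2 ω = 0} = 0 := by
    rw [← withDensity_setOf_snd_eq_zero (fun p => ENNReal.ofReal (f p.1 p.2)), ← hlaw,
      Measure.map_apply hX (measurableSet_eq_fun measurable_snd measurable_const)]
    rfl
  refine ⟨fun x => ?_, hmap⟩
  have : IsFiniteMeasure (volume.withDensity fun t => ENNReal.ofReal (divDensityReal f t)) :=
    hmap ▸ inferInstance
  rw [measure_add_measure_eq_measure_div_le hX.fst hX.snd hX2_zero,
    ← Measure.map_apply (by fun_prop) measurableSet_Iic, hmap,
    withDensity_ofReal_apply_eq_ofReal_setIntegral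
    (measurable_divDensityReal (measurable_bvnDensity μ1 μ2 σ1 σ2 ρ))
    (divDensityReal_nonneg hf0) measurableSet_Iic]
  rfl
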